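/- arXiv:gr-qc/9612051 — 2 statements merged into one kernel-verified Lean document; each statement's English description precedes it below -/
import Mathlib

section
/- Fix n ≥ 1 and a smooth H : ℝ^n × ℝ^n → ℝ. Let c : I → ℝ × ℝ × ℝ^n × ℝ^n, c(t) = (T(t), P(t), q(t), p(t)), be a C¹ curve defined on an interval I such that c(t) ∈ Γ for all t, the velocity c'(t) lies in the longitudinal space L_{c(t)} for all t, and the curve is parametrized by T, i.e. T(t) = t. Then q and p satisfy Hamilton's equations q̇(t) = ∂H/∂p(q(t),p(t)), ṗ(t) = −∂H/∂q(q(t),p(t)), and P(t) = −H(q(t),p(t)) for all t. (Orbits of the longitudinal distribution, parametrized by T, yield solutions of the original Hamiltonian dynamical system.) -/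
noncomputable section

/-- The extended phase space `ℝ × ℝ × ℝ^n × ℝ^n` with points `(T, P, q, p)`. -/
abbrev ExtPhase (n : ℕ) := ℝ × ℝ × (Fin n → ℝ) × (Fin n → ℝ)

/-- The standard symplectic bilinear form
`Ω̃((T,P,q,p),(T',P',q',p')) = P T' − T P' + Σ_k (p_k q'_k − q_k p'_k)`. -/
def OmTilde {n : ℕ} (v w : ExtPhase n) : ℝ :=
  v.2.1 * w.1 - v.1 * w.2.1 + ∑ k, (v.2.2.2 k * w.2.2.1 k - v.2.2.1 k * w.2.2.2 k)

/-- The constraint function `C(T,P,q,p) = P + H(q,p)`. -/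
def Cst {n : ℕ} (H : (Fin n → ℝ) × (Fin n → ℝ) → ℝ) (v : ExtPhase n) : ℝ :=
  v.2.1 + H (v.2.2.1, v.2.2.2)

lemma hasFDerivAt_Cst {n : ℕ} (H : (Fin n → ℝ) × (Fin n → ℝ) → ℝ) (hH : ContDiff ℝ (⊤ : ℕ∞) H)
    (x : ExtPhase n) :
    HasFDerivAt (Cst H)
      (((ContinuousLinearMap.fst ℝ ℝ ((Fin n → ℝ) × (Fin n → ℝ))).comp
          (ContinuousLinearMap.snd ℝ ℝ (ℝ × (Fin n → ℝ) × (Fin n → ℝ)))) +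
        (fderiv ℝ H x.2.2).comp
          ((ContinuousLinearMap.snd ℝ ℝ ((Fin n → ℝ) × (Fin n → ℝ))).comp
            (ContinuousLinearMap.snd ℝ ℝ (ℝ × (Fin n → ℝ) × (Fin n → ℝ))))) x := by
  have h1 : HasFDerivAt (fun v : ExtPhase n => v.2.1)
      ((ContinuousLinearMap.fst ℝ ℝ ((Fin n → ℝ) × (Fin n → ℝ))).comp
        (ContinuousLinearMap.snd ℝ ℝ (ℝ × (Fin n → ℝ) × (Fin n → ℝ)))) x :=
    ((ContinuousLinearMap.fst ℝ ℝ ((Fin n → ℝ) × (Fin n → ℝ))).comp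
        (ContinuousLinearMap.snd ℝ ℝ (ℝ × (Fin n → ℝ) × (Fin n → ℝ)))).hasFDerivAt
  have h2 : HasFDerivAt (fun v : ExtPhase n => H v.2.2)
      ((fderiv ℝ H x.2.2).comp
        ((ContinuousLinearMap.snd ℝ ℝ ((Fin n → ℝ) × (Fin n → ℝ))).comp
          (ContinuousLinearMap.snd ℝ ℝ (ℝ × (Fin n → ℝ) × (Fin n → ℝ))))) x :=
    ((hH.differentiable (by simp) x.2.2).hasFDerivAt).comp x
      (((ContinuousLinearMap.snd ℝ ℝ ((Fin n → ℝ) × (Fin n → ℝ))).comp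
        (ContinuousLinearMap.snd ℝ ℝ (ℝ × (Fin n → ℝ) × (Fin n → ℝ)))).hasFDerivAt)
  exact h1.add h2

/-- A C¹ curve `c(t) = (T(t),P(t),q(t),p(t))` in the constraint
surface `Γ`, defined on a (nondegenerate) interval, with velocity in the
longitudinal space `L_{c(t)}` and parametrized by `T` (i.e. `T(t) = t`), satisfies
Hamilton's equations `q̇ = ∂H/∂p`, `ṗ = −∂H/∂q` and `P(t) = −H(q(t),p(t))`. -/
theorem longitudinal_curve_satisfies_hamilton_equations
    (n : ℕ) (hn : 1 ≤ n) (H : (Fin n → ℝ) × (Fin n → ℝ) → ℝ) (hH : ContDiff ℝ (⊤ : ℕ∞) H)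
    (I : Set ℝ) (hI : I.OrdConnected) (hInd : ∃ a ∈ I, ∃ b ∈ I, a < b)
    (c c' : ℝ → ExtPhase n)
    (hderiv : ∀ t ∈ I, HasDerivAt c (c' t) t)
    (hΓ : ∀ t ∈ I, Cst H (c t) = 0)
    (hL : ∀ t ∈ I, fderiv ℝ (Cst H) (c t) (c' t) = 0 ∧
      ∀ w : ExtPhase n, fderiv ℝ (Cst H) (c t) w = 0 → OmTilde (c' t) w = 0)
    (hT : ∀ t ∈ I, (c t).1 = t) :
    ∀ t ∈ I,
      ((c' t).2.2.1 =
        fun k => fderiv ℝ H ((c t).2.2.1, (c t).2.2.2) (0, Pi.single k 1)) ∧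
      ((c' t).2.2.2 =
        fun k => -fderiv ℝ H ((c t).2.2.1, (c t).2.2.2) (Pi.single k 1, 0)) ∧
      (c t).2.1 = -H ((c t).2.2.1, (c t).2.2.2) := by
  intro t ht
  obtain ⟨a, ha, b, hb, hab⟩ := hInd
  -- unique differentiability within I at t
  have hmin : min t a ∈ I := by
    rcases le_total t a with h | h
    · simpa [min_eq_left h] using ht
    · simpa [min_eq_right h] using ha
  have hmax : max t b ∈ I := by
    rcases le_total t b with h | h
    · simpa [max_eq_right h] using hb
    · simpa [max_eq_left h] using ht
  have hsub : Set.Icc (min t a) (max t b) ⊆ I := hI.out hmin hmax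
  have hlt : min t a < max t b :=
    lt_of_le_of_lt (min_le_right _ _) (lt_of_lt_of_le hab (le_max_right _ _))
  have hu : UniqueDiffWithinAt ℝ I t :=
    ((uniqueDiffOn_Icc hlt) t ⟨min_le_left _ _, le_max_left _ _⟩).mono hsub
  -- T'(t) = 1
  have hT1 : (c' t).1 = 1 := by
    have h1 : HasDerivWithinAt (fun s => (c s).1) ((c' t).1) I t :=
      ((ContinuousLinearMap.fst ℝ ℝ (ℝ × (Fin n → ℝ) × (Fin n → ℝ))).hasFDerivAt.comp_hasDerivAt
        t (hderiv t ht)).hasDerivWithinAt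
    have h2 : HasDerivWithinAt (fun s => (c s).1) 1 I t :=
      (hasDerivWithinAt_id t I).congr (fun s hs => hT s hs) (hT t ht)
    rw [← h1.derivWithin hu, h2.derivWithin hu]
  -- the derivative of the constraint
  have hDC : ∀ w : ExtPhase n,
      fderiv ℝ (Cst H) (c t) w = w.2.1 + fderiv ℝ H (c t).2.2 w.2.2 := by
    intro w
    rw [(hasFDerivAt_Cst H hH (c t)).fderiv]
    rfl
  obtain ⟨-, hperp⟩ := hL t ht
  have key : ∀ e : (Fin n → ℝ) × (Fin n → ℝ),
      fderiv ℝ H (c t).2.2 e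
        + (∑ k, ((c' t).2.2.2 k * e.1 k - (c' t).2.2.1 k * e.2 k)) = 0 := by
    intro e
    have hw := hperp (0, -(fderiv ℝ H (c t).2.2 e), e) (by rw [hDC]; simp)
    simp only [OmTilde, hT1] at hw
    linarith [hw]
  have hq : ∀ k, (c' t).2.2.1 k = fderiv ℝ H (c t).2.2 (0, Pi.single k 1) := by
    intro k
    have := key (0, Pi.single k 1)
    simp only [Pi.single_apply] at this
    simp only [mul_ite, mul_one, mul_zero, Pi.zero_apply, sub_zero, zero_sub, Finset.sum_neg_distrib, neg_neg,
      Finset.sum_ite_eq', Finset.mem_univ, if_true] at this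
    linarith [this]
  have hp : ∀ k, (c' t).2.2.2 k = -fderiv ℝ H (c t).2.2 (Pi.single k 1, 0) := by
    intro k
    have := key (Pi.single k 1, 0)
    simp only [Pi.single_apply] at this
    simp only [mul_ite, mul_one, mul_zero, Pi.zero_apply, sub_zero, zero_sub, Finset.sum_neg_distrib, neg_neg,
      Finset.sum_ite_eq', Finset.mem_univ, if_true] at this
    linarith [this]
  refine ⟨funext hq, funext hp, ?_⟩
  have := hΓ t ht
  simp only [Cst] at this
  linarith [this]
end
end

section
/- Let X be a set with an equivalence relation ~ (whose classes are the c-orbits). Let I be an index set, (Γ_t)_{t∈I} a family of subsets of X each of which meets every equivalence class in exactly one point (global transversal surfaces), and θ_{ts} : Γ_s → Γ_t a family of maps (time shifts). Let F be a family of functions X → ℝ such that: each f ∈ F is constant on every equivalence class; F separates classes, i.e. if f(x) = f(y) for all f ∈ F then x ~ y; and each f ∈ F is an integral of motion, i.e. f(θ_{ts}(x)) = f(x) for all t, s ∈ I and x ∈ Γ_s. Then the dynamics is frozen: for every equivalence class γ and all t, s ∈ I, the time shift maps the intersection point of γ with Γ_s to the intersection point of γ with Γ_t, i.e. θ_{ts}(γ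 ∩ Γ_s) = γ ∩ Γ_t. -/
/-- If a family `F` of perennials (functions constant on
c-orbits) separates c-orbits and consists of integrals of motion for an auxiliary
rest frame of global transversal surfaces `Γ_t` with time shifts `θ_{ts}`, then
the dynamics is frozen: `θ_{ts}(γ ∩ Γ_s) = γ ∩ Γ_t` for every c-orbit `γ`. -/
theorem frozen_dynamics_of_complete_integrals_of_motion
    {X : Type*} {I : Type*} (r : X → X → Prop) (hr : Equivalence r)
    (Γ : I → Set X)
    (hmeet : ∀ (t : I) (x : X), ∃! y : X, y ∈ Γ t ∧ r x y)
    (θ : I → I → X → X)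
    (hmap : ∀ (t s : I), ∀ x ∈ Γ s, θ t s x ∈ Γ t)
    (F : Set (X → ℝ))
    (hperen : ∀ f ∈ F, ∀ x y : X, r x y → f x = f y)
    (hsep : ∀ x y : X, (∀ f ∈ F, f x = f y) → r x y)
    (hint : ∀ f ∈ F, ∀ (t s : I), ∀ x ∈ Γ s, f (θ t s x) = f x) :
    ∀ (z : X) (t s : I),
      θ t s '' ({y : X | r z y} ∩ Γ s) = {y : X | r z y} ∩ Γ t := by
  intro z t s
  ext y
  constructor
  · rintro ⟨x, ⟨hzx, hxs⟩, rfl⟩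
    have hrx : r x (θ t s x) := hsep x (θ t s x) (fun f hf => (hint f hf t s x hxs).symm)
    exact ⟨hr.trans hzx hrx, hmap t s x hxs⟩
  · rintro ⟨hzy, hyt⟩
    obtain ⟨x, ⟨hxs, hzx⟩, _⟩ := hmeet s z
    have hrx : r x (θ t s x) := hsep x (θ t s x) (fun f hf => (hint f hf t s x hxs).symm)
    obtain ⟨w, -, huniq⟩ := hmeet t z
    have h1 : y = w := huniq y ⟨hyt, hzy⟩
    have h2 : θ t s x = w := huniq _ ⟨hmap t s x hxs, hr.trans hzx hrx⟩
    exact ⟨x, ⟨hzx, hxs⟩, h2.trans h1.symm⟩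
end
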